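/- arXiv:1410.2617 — 5 statements merged into one kernel-verified Lean document; each statement's English description precedes it below -/
import Mathlib

section
/- In a generalized Łukasiewicz semi-ring S, for every x ∈ S: (x⁻)∼ = x and (x∼)⁻ = x. -/
/-- A generalized Łukasiewicz semi-ring: an additively idempotent semi-ring with
maps `⁻` (`nm`) and `∼` (`nt`) satisfying (i), (ii), (iii), where `x ≤ y ↔ x + y = y`. -/
class GLSemiring (S : Type*) extends Semiring S where
  add_idem : ∀ x : S, x + x = x
  nm : S → S   -- `x⁻`
  nt : S → S   -- `x∼`
  ax_i : ∀ x y : S, (x * y = 0 ↔ y + nm x = nm x) ∧ (x * y = 0 ↔ x + nt y = nt y)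
  ax_ii : ∀ x y : S, x + y = nm (nt (nt x * y) * nt x) ∧
    x + y = nm (nt x * nt (y * nm x))
  ax_iii : ∀ x y : S, nm (nt y * nt x) = nt (nm y * nm x)

namespace GLSemiring

variable {S : Type*} [GLSemiring S]

lemma mul_nm_self' (x : S) : x * nm x = 0 :=
  ((ax_i x (nm x)).1).mpr (add_idem (nm x))

lemma nt_mul_self' (x : S) : nt x * x = 0 :=
  ((ax_i (nt x) x).2).mpr (add_idem (nt x))

/-- `x ≤ nt (nm x)` -/
lemma le_nt_nm (x : S) : x + nt (nm x) = nt (nm x) :=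
  ((ax_i x (nm x)).2).mp (mul_nm_self' x)

/-- `x ≤ nm (nt x)` -/
lemma le_nm_nt (x : S) : x + nm (nt x) = nm (nt x) :=
  ((ax_i (nt x) x).1).mp (nt_mul_self' x)

lemma nm_antitone {a b : S} (h : a + b = b) : nm b + nm a = nm a := by
  have h0 : a * nm b = 0 := by
    have := congrArg (· * nm b) h
    simp only [add_mul] at this
    rw [mul_nm_self' b] at this
    simpa using this
  exact ((ax_i a (nm b)).1).mp h0

lemma nt_antitone {a b : S} (h : a + b = b) : nt b + nt a = nt a := by
  have h0 : nt b * a = 0 := by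
    have := congrArg (nt b * ·) h
    simp only [mul_add] at this
    rw [nt_mul_self' b] at this
    simpa using this
  exact ((ax_i (nt b) a).2).mp h0

lemma nm_nt_nm (x : S) : nm (nt (nm x)) = nm x := by
  have h1 : nm (nt (nm x)) + nm x = nm x := nm_antitone (le_nt_nm x)
  have h2 : nm x + nm (nt (nm x)) = nm (nt (nm x)) := le_nm_nt (nm x)
  calc nm (nt (nm x)) = nm x + nm (nt (nm x)) := h2.symm
    _ = nm (nt (nm x)) + nm x := add_comm _ _
    _ = nm x := h1

lemma nt_nm_nt (x : S) : nt (nm (nt x)) = nt x := by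
  have h1 : nt (nm (nt x)) + nt x = nt x := nt_antitone (le_nm_nt x)
  have h2 : nt x + nt (nm (nt x)) = nt (nm (nt x)) := le_nt_nm (nt x)
  calc nt (nm (nt x)) = nt x + nt (nm (nt x)) := h2.symm
    _ = nt (nm (nt x)) + nt x := add_comm _ _
    _ = nt x := h1

lemma eq_nt (x : S) : x = nt (nm 0 * nm x) := by
  have h := (ax_ii x 0).1
  rw [mul_zero, add_zero] at h
  rw [ax_iii x 0] at h
  exact h

lemma eq_nm (x : S) : x = nm (nt x * nt 0) := by
  have h := (ax_ii x 0).2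
  rw [zero_mul, add_zero] at h
  exact h

end GLSemiring

open GLSemiring in
/-- In a generalized Łukasiewicz semi-ring, `(x⁻)∼ = x` and `(x∼)⁻ = x`. -/
theorem GLSemiring.neg_neg {S : Type*} [GLSemiring S] (x : S) :
    nt (nm x) = x ∧ nm (nt x) = x := by
  constructor
  · conv_lhs => rw [eq_nt x]
    rw [nt_nm_nt, ← eq_nt]
  · conv_lhs => rw [eq_nm x]
    rw [nm_nt_nm, ← eq_nm]
end

section
/- For any ring R and two-sided ideals I, J of R: I + J ⊆ ((I∼ · J)∼ · I∼)⁻, where I⁻ and I∼ denote right and left annihilator ideals and · denotes the product of ideals. -/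
variable {R : Type*} [NonUnitalRing R]

/-- The right annihilator of a two-sided ideal: `I⁻ = {x : ∀ a ∈ I, a * x = 0}`. -/
def annR (I : TwoSidedIdeal R) : TwoSidedIdeal R :=
  TwoSidedIdeal.mk' {x : R | ∀ a ∈ I, a * x = 0}
    (fun a _ => mul_zero a)
    (fun {x y} hx hy a ha => by rw [mul_add, hx a ha, hy a ha, add_zero])
    (fun {x} hx a ha => by rw [mul_neg, hx a ha, neg_zero])
    (fun {x y} hy a ha => by rw [← mul_assoc]; exact hy _ (I.mul_mem_right a x ha))
    (fun {x y} hx a ha => by rw [← mul_assoc, hx a ha, zero_mul])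

/-- The left annihilator of a two-sided ideal: `I∼ = {x : ∀ a ∈ I, x * a = 0}`. -/
def annL (I : TwoSidedIdeal R) : TwoSidedIdeal R :=
  TwoSidedIdeal.mk' {x : R | ∀ a ∈ I, x * a = 0}
    (fun a _ => zero_mul a)
    (fun {x y} hx hy a ha => by rw [add_mul, hx a ha, hy a ha, add_zero])
    (fun {x} hx a ha => by rw [neg_mul, hx a ha, neg_zero])
    (fun {x y} hy a ha => by rw [mul_assoc, hy a ha, mul_zero])
    (fun {x y} hx a ha => by rw [mul_assoc]; exact hx _ (I.mul_mem_left y a ha))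

/-- The product of two two-sided ideals: the ideal generated by `{a * b : a ∈ I, b ∈ J}`. -/
def prodI (I J : TwoSidedIdeal R) : TwoSidedIdeal R :=
  sInf {K : TwoSidedIdeal R | ∀ a ∈ I, ∀ b ∈ J, a * b ∈ K}


lemma mem_annL {I : TwoSidedIdeal R} {x : R} : x ∈ annL I ↔ ∀ a ∈ I, x * a = 0 :=
  TwoSidedIdeal.mem_mk' _ _ _ _ _ _ _

lemma mem_annR {I : TwoSidedIdeal R} {x : R} : x ∈ annR I ↔ ∀ a ∈ I, a * x = 0 :=
  TwoSidedIdeal.mem_mk' _ _ _ _ _ _ _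

lemma prodI_le {I J K : TwoSidedIdeal R} (h : ∀ a ∈ I, ∀ b ∈ J, a * b ∈ K) :
    prodI I J ≤ K := sInf_le h

lemma mem_prodI {I J : TwoSidedIdeal R} {a b : R} (ha : a ∈ I) (hb : b ∈ J) :
    a * b ∈ prodI I J := (TwoSidedIdeal.mem_sInf _).mpr fun _ hK => hK a ha b hb

/-- For two-sided ideals `I, J` of a ring: `I + J ⊆ ((I∼ · J)∼ · I∼)⁻`. -/
theorem sup_le_ann {R : Type*} [NonUnitalRing R] (I J : TwoSidedIdeal R) :
    I ⊔ J ≤ annR (prodI (annL (prodI (annL I) J)) (annL I)) := by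
  have hK1 : prodI (annL (prodI (annL I) J)) (annL I) ≤ annL I :=
    prodI_le fun a _ b hb => mem_annL.mpr fun c hc => by
      rw [mul_assoc, mem_annL.mp hb c hc, mul_zero]
  have hK2 : prodI (annL (prodI (annL I) J)) (annL I) ≤ annL J :=
    prodI_le fun a ha b hb => mem_annL.mpr fun c hc => by
      rw [mul_assoc]
      exact mem_annL.mp ha _ (mem_prodI hb hc)
  refine sup_le (fun x hx => mem_annR.mpr fun a ha => mem_annL.mp (hK1 ha) x hx)
    (fun x hx => mem_annR.mpr fun a ha => mem_annL.mp (hK2 ha) x hx)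
end

section
/- In a generalized Łukasiewicz ring R, every ideal I satisfies I** = I, where I* denotes the (two-sided) annihilator of I. -/
variable {R : Type*} [NonUnitalRing R]

/-- A generalized Łukasiewicz ring: generated by central idempotents and satisfying
(AN) `I⁻ = I∼`, (CO) `I·J = J·I`, (LR) `I + J = (I*·(I*·J)*)*` for all two-sided ideals. -/
def IsGLR (R : Type*) [NonUnitalRing R] : Prop :=
  (∀ x : R, ∃ e : R, IsIdempotentElem e ∧ e ∈ Set.center R ∧ e * x = x) ∧
  (∀ I : TwoSidedIdeal R, annR I = annL I) ∧
  (∀ I J : TwoSidedIdeal R, prodI I J = prodI J I) ∧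
  (∀ I J : TwoSidedIdeal R,
    I ⊔ J = annR (prodI (annR I) (annR (prodI (annR I) J))))

lemma annR_bot : annR (⊥ : TwoSidedIdeal R) = ⊤ := by
  ext x
  simp only [mem_annR, TwoSidedIdeal.mem_top, iff_true]
  intro a ha
  rw [TwoSidedIdeal.mem_bot] at ha
  rw [ha, zero_mul]

lemma prodI_top (hgen : ∀ x : R, ∃ e : R, IsIdempotentElem e ∧ e ∈ Set.center R ∧ e * x = x)
    (K : TwoSidedIdeal R) : prodI ⊤ K = K := by
  apply le_antisymm
  · exact sInf_le (fun a _ b hb => K.mul_mem_left a b hb)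
  · intro x hx
    obtain ⟨e, _, _, hex⟩ := hgen x
    rw [← hex]
    exact (TwoSidedIdeal.mem_sInf (S := _)).mpr fun J hJ => hJ e trivial x hx

/-- In a generalized Łukasiewicz ring, every two-sided ideal satisfies `I** = I`. -/
theorem IsGLR.ann_ann {R : Type*} [NonUnitalRing R] (hR : IsGLR R)
    (I : TwoSidedIdeal R) : annR (annR I) = I := by
  obtain ⟨hgen, -, -, hLR⟩ := hR
  have := hLR ⊥ I
  rwa [bot_sup_eq, annR_bot, prodI_top hgen, prodI_top hgen, eq_comm] at this
end

section
/- In a generalized Łukasiewicz ring R, the lattice of two-sided ideals is distributive: for all ideals I, J, K, I ∩ (J + K) = (I ∩ J) + (I ∩ K). -/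
variable {R : Type*} [NonUnitalRing R]

namespace GLRAux

lemma mem_annR {I : TwoSidedIdeal R} {x : R} : x ∈ annR I ↔ ∀ a ∈ I, a * x = 0 :=
  TwoSidedIdeal.mem_mk' _ _ _ _ _ _ x

lemma mem_annL {I : TwoSidedIdeal R} {x : R} : x ∈ annL I ↔ ∀ a ∈ I, x * a = 0 :=
  TwoSidedIdeal.mem_mk' _ _ _ _ _ _ x

lemma mul_mem_prodI {I J : TwoSidedIdeal R} {a b : R} (ha : a ∈ I) (hb : b ∈ J) :
    a * b ∈ prodI I J := (TwoSidedIdeal.mem_sInf R).2 fun _ hK => hK a ha b hb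

lemma prodI_le_iff {I J K : TwoSidedIdeal R} :
    prodI I J ≤ K ↔ ∀ a ∈ I, ∀ b ∈ J, a * b ∈ K :=
  ⟨fun h a ha b hb => h (mul_mem_prodI ha hb), fun h => sInf_le h⟩

lemma prodI_mono {I I' J J' : TwoSidedIdeal R} (h1 : I ≤ I') (h2 : J ≤ J') :
    prodI I J ≤ prodI I' J' :=
  prodI_le_iff.2 fun a ha b hb => mul_mem_prodI (h1 ha) (h2 hb)

lemma prodI_le_left {I J : TwoSidedIdeal R} : prodI I J ≤ I :=
  prodI_le_iff.2 fun a ha b _ => I.mul_mem_right a b ha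

lemma prodI_le_right {I J : TwoSidedIdeal R} : prodI I J ≤ J :=
  prodI_le_iff.2 fun a _ b hb => J.mul_mem_left a b hb

/-- The Galois connection for the annihilator, using axiom (AN). -/
lemma galois (hAN : ∀ I : TwoSidedIdeal R, annR I = annL I) {I J : TwoSidedIdeal R} :
    I ≤ annR J ↔ J ≤ annR I := by
  rw [hAN I]
  constructor
  · intro h x hx
    exact mem_annL.2 fun a ha => mem_annR.1 (h ha) x hx
  · intro h x hx
    exact mem_annR.2 fun a ha => mem_annL.1 (h ha) x hx

lemma annR_antitone {I J : TwoSidedIdeal R} (h : I ≤ J) : annR J ≤ annR I :=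
  fun x hx => mem_annR.2 fun a ha => mem_annR.1 hx a (h ha)

lemma prodI_sup_right {I J K : TwoSidedIdeal R} :
    prodI I (J ⊔ K) = prodI I J ⊔ prodI I K := by
  refine le_antisymm ?_ (sup_le (prodI_mono le_rfl le_sup_left) (prodI_mono le_rfl le_sup_right))
  refine prodI_le_iff.2 fun a ha b hb => ?_
  obtain ⟨y, hy, z, hz, rfl⟩ := TwoSidedIdeal.mem_sup.1 hb
  rw [mul_add]
  exact TwoSidedIdeal.add_mem _ (TwoSidedIdeal.mem_sup_left (mul_mem_prodI ha hy))
    (TwoSidedIdeal.mem_sup_right (mul_mem_prodI ha hz))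

lemma annR_bot : annR (⊥ : TwoSidedIdeal R) = ⊤ :=
  eq_top_iff.2 fun x _ => mem_annR.2 fun a ha => by
    rw [(TwoSidedIdeal.mem_bot R).1 ha, zero_mul]

/-- The whole ring is a unit for the ideal product, using idempotent generation. -/
lemma top_prodI (hGen : ∀ x : R, ∃ e : R, IsIdempotentElem e ∧ e ∈ Set.center R ∧ e * x = x)
    {I : TwoSidedIdeal R} : prodI ⊤ I = I := by
  refine le_antisymm prodI_le_right fun x hx => ?_
  obtain ⟨e, -, -, he⟩ := hGen x
  rw [← he]
  exact mul_mem_prodI (TwoSidedIdeal.mem_top R) hx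

/-- The annihilator is an involution in a GLR. -/
lemma annR_annR (hR : IsGLR R) (I : TwoSidedIdeal R) : annR (annR I) = I := by
  obtain ⟨hGen, hAN, hCO, hLR⟩ := hR
  have h := hLR I ⊥
  rw [sup_bot_eq] at h
  have h1 : prodI (annR I) ⊥ = ⊥ := le_bot_iff.1 prodI_le_right
  rw [h1, annR_bot, hCO, top_prodI hGen] at h
  exact h.symm

lemma annR_sup (hAN : ∀ I : TwoSidedIdeal R, annR I = annL I) {X Y : TwoSidedIdeal R} :
    annR (X ⊔ Y) = annR X ⊓ annR Y :=
  le_antisymm (le_inf (annR_antitone le_sup_left) (annR_antitone le_sup_right))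
    ((galois hAN).2 (sup_le ((galois hAN).2 inf_le_left) ((galois hAN).2 inf_le_right)))

/-- Divisibility: `I ⊓ J = I · (I · J*)*`, obtained from axiom (LR) applied to the
annihilators, plus the involution and De Morgan laws. -/
lemma inf_eq_prodI (hR : IsGLR R) (I J : TwoSidedIdeal R) :
    I ⊓ J = prodI I (annR (prodI I (annR J))) := by
  have h := hR.2.2.2 (annR I) (annR J)
  rw [annR_annR hR I] at h
  have h2 := congrArg annR h
  simpa only [annR_sup hR.2.1, annR_annR hR] using h2

end GLRAux

/-- In a generalized Łukasiewicz ring, the lattice of two-sided ideals is distributive: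
`I ∩ (J + K) = (I ∩ J) + (I ∩ K)`. -/
theorem IsGLR.ideal_lattice_distrib {R : Type*} [NonUnitalRing R] (hR : IsGLR R)
    (I J K : TwoSidedIdeal R) : I ⊓ (J ⊔ K) = (I ⊓ J) ⊔ (I ⊓ K) := by
  open GLRAux in
  refine le_antisymm ?_ (sup_le (le_inf inf_le_left (inf_le_right.trans le_sup_left))
    (le_inf inf_le_left (inf_le_right.trans le_sup_right)))
  have hCO := hR.2.2.1
  set C := annR (prodI (J ⊔ K) (annR I)) with hC
  have hdiv : (J ⊔ K) ⊓ I = prodI (J ⊔ K) C := inf_eq_prodI hR _ _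
  have hsplit : prodI (J ⊔ K) C = prodI J C ⊔ prodI K C := by
    rw [hCO (J ⊔ K) C, prodI_sup_right, hCO C J, hCO C K]
  have hJ : prodI J C ≤ I ⊓ J := by
    have h1 : prodI J C ≤ prodI J (annR (prodI J (annR I))) :=
      prodI_mono le_rfl (annR_antitone (prodI_mono le_sup_left le_rfl))
    exact inf_comm J I ▸ (h1.trans (inf_eq_prodI hR J I).ge)
  have hK : prodI K C ≤ I ⊓ K := by
    have h1 : prodI K C ≤ prodI K (annR (prodI K (annR I))) :=
      prodI_mono le_rfl (annR_antitone (prodI_mono le_sup_right le_rfl))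
    exact inf_comm K I ▸ (h1.trans (inf_eq_prodI hR K I).ge)
  calc I ⊓ (J ⊔ K) = prodI J C ⊔ prodI K C := by rw [inf_comm, hdiv, hsplit]
    _ ≤ (I ⊓ J) ⊔ (I ⊓ K) := sup_le (hJ.trans le_sup_left) (hK.trans le_sup_right)
end

section
/- In a generalized Łukasiewicz ring R, every proper two-sided ideal is contained in a maximal two-sided ideal. -/
variable {R : Type*} [NonUnitalRing R]

/-- In a generalized Łukasiewicz ring, every proper two-sided ideal is contained in a
maximal two-sided ideal. -/
theorem IsGLR.exists_maximal {R : Type*} [NonUnitalRing R] (hR : IsGLR R)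
    (I : TwoSidedIdeal R) (hI : I ≠ ⊤) :
    ∃ M : TwoSidedIdeal R, IsCoatom M ∧ I ≤ M := by
  obtain ⟨hgen, -, -, -⟩ := hR
  -- find an element outside `I` and a central idempotent acting as identity on it
  have hx : ∃ x : R, x ∉ I := by
    by_contra h
    push_neg at h
    exact hI (eq_top_iff.2 fun z _ => h z)
  obtain ⟨x, hxI⟩ := hx
  obtain ⟨e, he_idem, he_cent, hex⟩ := hgen x
  have heI : e ∉ I := fun h => hxI (hex ▸ I.mul_mem_right e x h)
  -- Zorn's lemma on ideals containing I and avoiding e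
  set S : Set (TwoSidedIdeal R) := {K | e ∉ K} with hS
  have hzorn : ∀ c ⊆ S, IsChain (· ≤ ·) c → ∀ y ∈ c, ∃ ub ∈ S, ∀ z ∈ c, z ≤ ub := by
    intro c hcS hc K₀ hK₀
    refine ⟨TwoSidedIdeal.mk' (⋃ K ∈ c, (K : Set R))
      (Set.mem_biUnion hK₀ K₀.zero_mem)
      (fun {a b} ha hb => ?_) (fun {a} ha => ?_) (fun {a b} hb => ?_) (fun {a b} ha => ?_),
      ?_, ?_⟩
    · obtain ⟨_, ⟨K₁, rfl⟩, h1⟩ := ha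
      obtain ⟨_, ⟨hK₁c, rfl⟩, ha⟩ := h1
      obtain ⟨_, ⟨K₂, rfl⟩, h2⟩ := hb
      obtain ⟨_, ⟨hK₂c, rfl⟩, hb⟩ := h2
      rcases hc.total hK₁c hK₂c with h | h
      · exact Set.mem_biUnion hK₂c (K₂.add_mem (h ha) hb)
      · exact Set.mem_biUnion hK₁c (K₁.add_mem ha (h hb))
    · obtain ⟨_, ⟨K₁, rfl⟩, h1⟩ := ha
      obtain ⟨_, ⟨hK₁c, rfl⟩, ha⟩ := h1
      exact Set.mem_biUnion hK₁c (K₁.neg_mem ha)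
    · obtain ⟨_, ⟨K₁, rfl⟩, h1⟩ := hb
      obtain ⟨_, ⟨hK₁c, rfl⟩, hb⟩ := h1
      exact Set.mem_biUnion hK₁c (K₁.mul_mem_left a _ hb)
    · obtain ⟨_, ⟨K₁, rfl⟩, h1⟩ := ha
      obtain ⟨_, ⟨hK₁c, rfl⟩, ha⟩ := h1
      exact Set.mem_biUnion hK₁c (K₁.mul_mem_right _ b ha)
    · intro hmem
      rw [TwoSidedIdeal.mem_mk'] at hmem
      obtain ⟨_, ⟨K₁, rfl⟩, h1⟩ := hmem
      obtain ⟨_, ⟨hK₁c, rfl⟩, hmem⟩ := h1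
      exact hcS hK₁c hmem
    · intro K hKc
      intro z hz
      show z ∈ TwoSidedIdeal.mk' _ _ _ _ _ _
      rw [TwoSidedIdeal.mem_mk']
      exact Set.mem_biUnion hKc hz
  obtain ⟨M, hIM, hMS, hMmax⟩ := zorn_le_nonempty₀ S hzorn I heI
  -- key property: anything annihilated by e lies in M
  have hkey : ∀ z : R, e * z = 0 → z ∈ M := by
    intro z hz
    by_contra hzM
    -- consider N = {w | e * w ∈ M}
    set N : TwoSidedIdeal R := TwoSidedIdeal.mk' {w : R | e * w ∈ M}
      (by simp [Set.mem_setOf_eq, mul_zero, M.zero_mem])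
      (fun {a b} ha hb => by simp only [Set.mem_setOf_eq, mul_add]; exact M.add_mem ha hb)
      (fun {a} ha => by simp only [Set.mem_setOf_eq, mul_neg]; exact M.neg_mem ha)
      (fun {a b} hb => by
        simp only [Set.mem_setOf_eq]
        rw [← mul_assoc, he_cent.comm a, mul_assoc]
        exact M.mul_mem_left a _ hb)
      (fun {a b} ha => by
        simp only [Set.mem_setOf_eq, ← mul_assoc]
        exact M.mul_mem_right _ b ha) with hN
    have hMN : M ≤ N := by
      intro w hw
      show w ∈ N
      rw [hN, TwoSidedIdeal.mem_mk']
      exact M.mul_mem_left e w hw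
    have heN : e ∈ N := by
      by_contra heN
      have := hMmax (y := N) heN hMN
      have hzN : z ∈ N := by rw [hN, TwoSidedIdeal.mem_mk']; simp [hz, M.zero_mem]
      exact hzM (this hzN)
    rw [hN, TwoSidedIdeal.mem_mk'] at heN
    exact hMS (he_idem ▸ heN)
  refine ⟨M, ⟨?_, ?_⟩, hIM⟩
  · intro h
    exact hMS (h ▸ TwoSidedIdeal.mem_top R)
  · intro J hMJ
    have heJ : e ∈ J := by
      by_contra heJ
      exact absurd (hMmax (y := J) heJ hMJ.le) (not_le_of_gt hMJ)
    rw [eq_top_iff]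
    intro z _
    have h1 : e * z ∈ J := J.mul_mem_right e z heJ
    have h2 : z - e * z ∈ M := by
      apply hkey
      rw [mul_sub, ← mul_assoc, he_idem, sub_self]
    have : z = e * z + (z - e * z) := by abel
    rw [this]
    exact J.add_mem h1 (hMJ.le h2)
end
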